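/- For every m ≥ 3, eight times the number of words in the OP-LOCO code OPC(m) whose most significant symbol c_{m−1} equals 0 is equal to 7·|OPC(m−1)| + 4·|OPC(m−2)|. -/

import Mathlib

/-!
Write `N m = |OPC m|` and `X m` for the number of words of `OPC m` that begin with `2` followed by a
low symbol (one of `0, 1, 4, 5`). A word of `OPC (m + 1)` beginning with `s` is `s` followed by a
word of `OPC m` that does not begin with the continuation forbidden after `s`: `2` then a low
symbol if `s` is low, `5` then a high symbol otherwise. The involution `x ↦ 7 - x` preserves the
code and exchanges these two kinds of beginnings, so each first symbol leaves `N m - X m` words,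
and `N (m + 1) = 8 N m - 8 X m`. It also shows that half the words begin with a low symbol `t`;
such a word may be preceded by `2` unless it begins with `5` then a high symbol, so
`X (m + 1) + X m = N m / 2`. Together, `N (m + 1) = 4 N m + 8 X (m + 1)`, and the count of words
beginning with `0` is `N (m - 1) - X (m - 1) = (7 N (m - 1) + 4 N (m - 2)) / 8`.
-/

/-- The OP-LOCO code: words of length `m` over the alphabet `{0,...,7}`
(position `m-1` most significant) containing no contiguous subword `u 2 v` with
`u, v ∈ {0,1,4,5}` and no contiguous subword `u 5 v` with `u, v ∈ {2,3,6,7}`. -/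
def OPC (m : ℕ) : Set (Fin m → Fin 8) :=
  {c | ∀ i : ℕ, ∀ h : i + 2 < m,
      ¬((c ⟨i + 2, h⟩ ∈ ({0, 1, 4, 5} : Set (Fin 8)) ∧ c ⟨i + 1, by omega⟩ = 2 ∧
            c ⟨i, by omega⟩ ∈ ({0, 1, 4, 5} : Set (Fin 8))) ∨
        (c ⟨i + 2, h⟩ ∈ ({2, 3, 6, 7} : Set (Fin 8)) ∧ c ⟨i + 1, by omega⟩ = 5 ∧
            c ⟨i, by omega⟩ ∈ ({2, 3, 6, 7} : Set (Fin 8))))}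

open Finset Fin

namespace OPC

variable {m : ℕ}

def IsLow (x : Fin 8) : Prop := x ∈ ({0, 1, 4, 5} : Finset (Fin 8))

instance : DecidablePred IsLow := fun x => inferInstanceAs (Decidable (x ∈ _))

def Forbidden (u v w : Fin 8) : Prop :=
  IsLow u ∧ v = 2 ∧ IsLow w ∨ ¬ IsLow u ∧ v = 5 ∧ ¬ IsLow w

instance : ∀ u v w, Decidable (Forbidden u v w) := by
  unfold Forbidden; infer_instance

lemma mem_iff {c : Fin m → Fin 8} :
    c ∈ OPC m ↔ ∀ i : ℕ, ∀ h : i + 2 < m,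
      ¬ Forbidden (c ⟨i + 2, h⟩) (c ⟨i + 1, by omega⟩) (c ⟨i, by omega⟩) := by
  have pattern_iff : ∀ u v w : Fin 8,
      (u ∈ ({0, 1, 4, 5} : Set (Fin 8)) ∧ v = 2 ∧ w ∈ ({0, 1, 4, 5} : Set (Fin 8))) ∨
        (u ∈ ({2, 3, 6, 7} : Set (Fin 8)) ∧ v = 5 ∧ w ∈ ({2, 3, 6, 7} : Set (Fin 8))) ↔
        Forbidden u v w := by
    simp only [Set.mem_insert_iff, Set.mem_singleton_iff]
    decide
  simp only [OPC, Set.mem_ofPred_eq, pattern_iff]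

instance (m : ℕ) : DecidablePred (· ∈ OPC m) := fun c =>
  decidable_of_iff (∀ i : Fin m, ∀ h : (i : ℕ) + 2 < m,
      ¬ Forbidden (c ⟨i + 2, h⟩) (c ⟨i + 1, by omega⟩) (c i))
    ⟨fun H => mem_iff.2 fun i h => H ⟨i, by omega⟩ h, fun H i h => mem_iff.1 H i h⟩

lemma mem_iff_init {n : ℕ} {c : Fin (n + 3) → Fin 8} :
    c ∈ OPC (n + 3) ↔ init c ∈ OPC (n + 2) ∧
      ¬ Forbidden (c (last _)) (c (last _).castSucc) (c (last _).castSucc.castSucc) := by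
  simp only [mem_iff]
  constructor
  · intro H
    exact ⟨fun i h => H i (by omega), H n (by omega)⟩
  · rintro ⟨H, hlast⟩ i h
    rcases Nat.lt_or_ge (i + 2) (n + 2) with h' | h'
    · exact H i h'
    · obtain rfl : i = n := by omega
      exact hlast

lemma snoc_mem_iff {n : ℕ} {d : Fin (n + 2) → Fin 8} {s : Fin 8} :
    snoc d s ∈ OPC (n + 3) ↔
      d ∈ OPC (n + 2) ∧ ¬ Forbidden s (d (last _)) (d (last _).castSucc) := by
  simp [mem_iff_init, init_snoc, snoc_last, snoc_castSucc]

lemma forbidden_iff_of_isLow {s : Fin 8} (hs : IsLow s) (v w : Fin 8) :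
    Forbidden s v w ↔ v = 2 ∧ IsLow w := by
  revert s v w; decide

lemma forbidden_two_isLow : ∀ v w, Forbidden 2 v w → IsLow v := by decide

def mirror (x : Fin 8) : Fin 8 := 7 - x

lemma mirror_mirror : ∀ x, mirror (mirror x) = x := by decide

lemma isLow_mirror : ∀ x, IsLow (mirror x) ↔ ¬ IsLow x := by decide

lemma forbidden_mirror :
    ∀ u v w, Forbidden (mirror u) (mirror v) (mirror w) ↔ Forbidden u v w := by
  decide

lemma mirror_comp_mem {c : Fin m → Fin 8} (hc : c ∈ OPC m) : mirror ∘ c ∈ OPC m := by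
  rw [mem_iff] at hc ⊢
  simpa only [Function.comp_apply, forbidden_mirror] using hc

def count (m : ℕ) (P : (Fin m → Fin 8) → Prop) [DecidablePred P] : ℕ :=
  #{c | c ∈ OPC m ∧ P c}

abbrev card (m : ℕ) : ℕ := count m fun _ => True

lemma ncard_eq_count (P : (Fin m → Fin 8) → Prop) [DecidablePred P] :
    {c ∈ OPC m | P c}.ncard = count m P := by
  rw [count, ← Set.ncard_coe_finset]
  congr
  ext c
  simp

lemma ncard_eq_card : (OPC m).ncard = card m := by
  rw [card, ← ncard_eq_count]
  simp

lemma count_congr {P Q : (Fin m → Fin 8) → Prop} [DecidablePred P] [DecidablePred Q]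
    (h : ∀ c ∈ OPC m, P c ↔ Q c) : count m P = count m Q := by
  unfold count
  congr 1
  exact filter_congr fun c _ => and_congr_right (h c)

lemma count_and_add_count_and_not (P Q : (Fin m → Fin 8) → Prop) [DecidablePred P]
    [DecidablePred Q] :
    count m (fun c => P c ∧ Q c) + count m (fun c => P c ∧ ¬ Q c) = count m P := by
  unfold count
  rw [← card_filter_add_card_filter_not (s := {c | c ∈ OPC m ∧ P c}) Q]
  simp only [filter_filter, and_assoc]

lemma card_eq_sum_count (f : (Fin m → Fin 8) → Fin 8) :
    card m = ∑ s, count m (fun c => f c = s) := by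
  unfold card count
  rw [card_eq_sum_card_fiberwise (f := f) (t := univ) fun _ _ => mem_univ _]
  simp only [filter_filter, and_true]

lemma count_comp_mirror (P : (Fin m → Fin 8) → Prop) [DecidablePred P] :
    count m (fun c => P (mirror ∘ c)) = count m P := by
  have mirror_comp_mirror (c : Fin m → Fin 8) : mirror ∘ (mirror ∘ c) = c := by
    funext i; exact mirror_mirror (c i)
  refine card_nbij' (mirror ∘ ·) (mirror ∘ ·) ?_ ?_ (fun c _ => mirror_comp_mirror c)
    (fun c _ => mirror_comp_mirror c)
  · intro c hc
    simp only [coe_filter, mem_univ, true_and, Set.mem_ofPred_eq] at hc ⊢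
    exact ⟨mirror_comp_mem hc.1, hc.2⟩
  · intro c hc
    simp only [coe_filter, mem_univ, true_and, Set.mem_ofPred_eq] at hc ⊢
    exact ⟨mirror_comp_mem hc.1, by rw [mirror_comp_mirror]; exact hc.2⟩

lemma count_last_eq_and_init (n : ℕ) (s : Fin 8) (P : (Fin (n + 2) → Fin 8) → Prop)
    [DecidablePred P] :
    count (n + 3) (fun c => c (last _) = s ∧ P (init c)) =
      count (n + 2) (fun d => P d ∧ ¬ Forbidden s (d (last _)) (d (last _).castSucc)) := by
  refine card_nbij' init (snoc · s) ?_ ?_ (fun c hc => ?_) (fun d _ => init_snoc _ _)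
  · intro c hc
    simp only [coe_filter, mem_univ, true_and, Set.mem_ofPred_eq] at hc ⊢
    obtain ⟨hc, rfl, hP⟩ := hc
    exact ⟨(mem_iff_init.1 hc).1, hP, (mem_iff_init.1 hc).2⟩
  · intro d hd
    simp only [coe_filter, mem_univ, true_and, Set.mem_ofPred_eq] at hd ⊢
    exact ⟨snoc_mem_iff.2 ⟨hd.1, hd.2.2⟩, snoc_last _ _, by rw [init_snoc]; exact hd.2.1⟩
  · simp only [coe_filter, mem_univ, true_and, Set.mem_ofPred_eq] at hc
    rw [← hc.2.1]
    exact snoc_init_self c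

def countTwoLow (n : ℕ) : ℕ :=
  count (n + 2) fun c => c (last _) = 2 ∧ IsLow (c (last _).castSucc)

lemma count_forbidden (n : ℕ) (s : Fin 8) :
    count (n + 2) (fun d => Forbidden s (d (last _)) (d (last _).castSucc)) = countTwoLow n := by
  wlog hs : IsLow s
  · rw [← this n (mirror s) ((isLow_mirror s).2 hs), ← count_comp_mirror]
    exact count_congr fun d _ => by rw [← forbidden_mirror (mirror s), mirror_mirror]; rfl
  exact count_congr fun d _ => forbidden_iff_of_isLow hs _ _

lemma count_last_add_countTwoLow (n : ℕ) (s : Fin 8) :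
    count (n + 3) (fun c => c (last _) = s) + countTwoLow n = card (n + 2) := by
  have h := count_last_eq_and_init n s fun _ => True
  simp only [and_true, true_and] at h
  rw [h, ← count_forbidden n s, add_comm]
  simpa using count_and_add_count_and_not (m := n + 2) (fun _ => True)
    (fun d => Forbidden s (d (last _)) (d (last _).castSucc))

lemma card_add_countTwoLow (n : ℕ) : card (n + 3) + 8 * countTwoLow n = 8 * card (n + 2) := by
  calc card (n + 3) + 8 * countTwoLow n
      = ∑ s : Fin 8, (count (n + 3) (fun c => c (last _) = s) + countTwoLow n) := by
        rw [card_eq_sum_count (· (last _)), sum_add_distrib]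
        simp
    _ = 8 * card (n + 2) := by
        simp [count_last_add_countTwoLow]

lemma two_mul_count_isLow (n : ℕ) :
    2 * count (n + 1) (fun c => IsLow (c (last _))) = card (n + 1) := by
  have h : count (n + 1) (fun c => ¬ IsLow (c (last _))) =
      count (n + 1) (fun c => IsLow (c (last _))) := by
    rw [← count_comp_mirror]
    simp only [Function.comp_apply, isLow_mirror, not_not]
  simpa [two_mul, h] using count_and_add_count_and_not (m := n + 1) (fun _ => True)
    (fun c => IsLow (c (last _)))

lemma countTwoLow_succ_add (n : ℕ) :
    countTwoLow (n + 1) + countTwoLow n = count (n + 2) fun c => IsLow (c (last _)) := by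
  have hsucc : countTwoLow (n + 1) = count (n + 2) fun d =>
      IsLow (d (last _)) ∧ ¬ Forbidden 2 (d (last _)) (d (last _).castSucc) :=
    count_last_eq_and_init n 2 fun d => IsLow (d (last _))
  have hforb : countTwoLow n = count (n + 2) fun d =>
      IsLow (d (last _)) ∧ Forbidden 2 (d (last _)) (d (last _).castSucc) := by
    rw [← count_forbidden n 2]
    exact count_congr fun d _ => (and_iff_right_of_imp (forbidden_two_isLow _ _)).symm
  rw [hsucc, hforb, add_comm]
  exact count_and_add_count_and_not _ _

lemma card_recurrence (n : ℕ) : card (n + 2) = 4 * card (n + 1) + 8 * countTwoLow n := by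
  cases n with
  | zero => decide
  | succ n =>
    have h1 := card_add_countTwoLow n
    have h2 : 2 * count (n + 2) (fun c => IsLow (c (last _))) = card (n + 2) :=
      two_mul_count_isLow (n + 1)
    have h3 := countTwoLow_succ_add n
    show card (n + 3) = 4 * card (n + 2) + 8 * countTwoLow (n + 1)
    omega

end OPC

theorem stmt11 (m : ℕ) (hm : 3 ≤ m) :
    8 * {c ∈ OPC m | c ⟨m - 1, by omega⟩ = 0}.ncard =
      7 * (OPC (m - 1)).ncard + 4 * (OPC (m - 2)).ncard := by
  obtain ⟨n, rfl⟩ : ∃ n, m = n + 3 := ⟨m - 3, by omega⟩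
  rw [OPC.ncard_eq_count, OPC.ncard_eq_card, OPC.ncard_eq_card]
  have hfirst := OPC.count_last_add_countTwoLow n 0
  have hrec := OPC.card_recurrence n
  show 8 * OPC.count (n + 3) (fun c => c (last _) = 0) =
    7 * OPC.card (n + 2) + 4 * OPC.card (n + 1)
  omega
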